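/- arXiv:1407.1922 — 6 statements merged into one kernel-verified Lean document; each statement's English description precedes it below -/
import Mathlib

section
/- Let 0 < δ < 1 and 0 < δ_E < 1 and D ≥ 0. The optimal value of the linear program: maximize m subject to ((1-δ_E)/(1-δ·δ_E))·m ≤ k, k/((1-δ)·δ_E) + m/(1-δ) ≤ 1, k ≤ D·δ_E·(1-δ)/(1-δ·δ_E), k ≥ 0, m ≥ 0, equals min( ((1-δ)·δ_E/(1-δ_E))·D , (1-δ)·δ_E·(1-δ·δ_E)/(1-δ·δ_E²) ). -/
/-!
Since the second constraint is increasing in `k`, the key rate may always be lowered to its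
least admissible value `k = a m`. The linear program then collapses to the two bounds
`a m ≤ K` and `m (a / p + 1 / q) ≤ 1` on `m` alone, and the capacity is the smaller of them.
-/

def feasibleRates (a p q K : ℝ) : Set ℝ :=
  {m : ℝ | ∃ k : ℝ, a * m ≤ k ∧ k / p + m / q ≤ 1 ∧ k ≤ K ∧ 0 ≤ k ∧ 0 ≤ m}

section feasibleRates

variable {a p q K m : ℝ}

theorem mem_feasibleRates_iff (ha : 0 ≤ a) (hp : 0 < p) :
    m ∈ feasibleRates a p q K ↔ 0 ≤ m ∧ a * m ≤ K ∧ a * m / p + m / q ≤ 1 := by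
  constructor
  · rintro ⟨k, hmk, hsum, hkK, -, hm⟩
    exact ⟨hm, hmk.trans hkK, le_trans (by gcongr) hsum⟩
  · rintro ⟨hm, hK, hsum⟩
    exact ⟨a * m, le_rfl, hsum, hK, mul_nonneg ha hm, hm⟩

theorem isGreatest_feasibleRates (ha : 0 < a) (hp : 0 < p) (hq : 0 < q) (hK : 0 ≤ K) :
    IsGreatest (feasibleRates a p q K) (min (K / a) (a / p + 1 / q)⁻¹) := by
  have hc : 0 < a / p + 1 / q := by positivity
  have hsum_iff : ∀ m, a * m / p + m / q ≤ 1 ↔ m ≤ (a / p + 1 / q)⁻¹ := fun m => by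
    rw [← one_div, le_div_iff₀ hc, mul_add, mul_div_assoc', mul_one_div, mul_comm m a]
  simp only [IsGreatest, upperBounds, Set.mem_ofPred_eq, mem_feasibleRates_iff ha.le hp,
    hsum_iff, ← le_div_iff₀' ha, le_min_iff]
  exact ⟨⟨⟨by positivity, by positivity⟩, min_le_left _ _, min_le_right _ _⟩,
    fun _ ⟨_, hK, hsum⟩ => ⟨hK, hsum⟩⟩

end feasibleRates

theorem secret_message_capacity_LP_general (δ δE D : ℝ)
    (hδ1 : δ < 1) (hδE0 : 0 < δE) (hδE1 : δE < 1) (hD : 0 ≤ D) :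
    IsGreatest {m : ℝ | ∃ k : ℝ,
        (1 - δE) / (1 - δ * δE) * m ≤ k ∧
        k / ((1 - δ) * δE) + m / (1 - δ) ≤ 1 ∧
        k ≤ D * δE * (1 - δ) / (1 - δ * δE) ∧
        0 ≤ k ∧ 0 ≤ m}
      (min ((1 - δ) * δE / (1 - δE) * D)
        ((1 - δ) * δE * (1 - δ * δE) / (1 - δ * δE ^ 2))) := by
  have hδ : 0 < 1 - δ := by linarith
  have hδE : 0 < 1 - δE := by linarith
  have hδδE : 0 < 1 - δ * δE := by linarith [mul_pos hδ hδE0]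
  have hkey_bound : D * δE * (1 - δ) / (1 - δ * δE) / ((1 - δE) / (1 - δ * δE)) =
      (1 - δ) * δE / (1 - δE) * D := by
    rw [div_div_div_cancel_right₀ hδδE.ne']
    ring
  have hrate_bound : ((1 - δE) / (1 - δ * δE) / ((1 - δ) * δE) + 1 / (1 - δ))⁻¹ =
      (1 - δ) * δE * (1 - δ * δE) / (1 - δ * δE ^ 2) := by
    rw [← inv_div (1 - δ * δE ^ 2), inv_inj, div_div, div_add_div _ _ (by positivity) hδ.ne',
      div_eq_div_iff (by positivity) (by positivity)]
    ring
  rw [← hkey_bound, ← hrate_bound]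
  exact isGreatest_feasibleRates (by positivity) (by positivity) hδ (by positivity)

/-- Secret message capacity LP of the broadcast erasure channel with feedback
and limited source randomness `D`. -/
theorem secret_message_capacity_LP (δ δE D : ℝ)
    (hδ0 : 0 < δ) (hδ1 : δ < 1) (hδE0 : 0 < δE) (hδE1 : δE < 1) (hD : 0 ≤ D) :
    IsGreatest {m : ℝ | ∃ k : ℝ,
        (1 - δE) / (1 - δ * δE) * m ≤ k ∧
        k / ((1 - δ) * δE) + m / (1 - δ) ≤ 1 ∧
        k ≤ D * δE * (1 - δ) / (1 - δ * δE) ∧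
        0 ≤ k ∧ 0 ≤ m}
      (min ((1 - δ) * δE / (1 - δE) * D)
        ((1 - δ) * δE * (1 - δ * δE) / (1 - δ * δE ^ 2))) :=
  secret_message_capacity_LP_general δ δE D hδ1 hδE0 hδE1 hD
end

section
/- Let 0 < δ < 1 and 0 < δ_E < 1. Then for every D ≥ 0, the ARQ secret key rate R_ARQ(D) = min(D·(1-δ)·δ_E/(1-δ·δ_E), (1-δ)²·δ_E/(1-δ·δ_E)) is at most the MDS-exp secret key rate R_MDS(D) = min(D·δ_E·(1-δ)/(1-δ·δ_E), (1-δ)·δ_E), with equality if and only if D ≤ 1-δ. -/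
/-!
Writing `a = (1 - δ) δE / (1 - δ δE) > 0`, the two rates are `min (D a) ((1 - δ) a)` and
`min (D a) ((1 - δ) δE)`. Since `1 - δ < 1 - δ δE`, the ARQ cap `(1 - δ) a` lies strictly below
the MDS cap `(1 - δ) δE`, and two minima of `D a` with different caps agree exactly when `D a`
is at most the smaller cap, i.e. when `D ≤ 1 - δ`.
-/

theorem min_eq_min_iff_of_lt {α : Type*} [LinearOrder α] {x c d : α} (hcd : c < d) :
    min x c = min x d ↔ x ≤ c := by
  refine ⟨fun h => ?_, fun hxc => by rw [min_eq_left hxc, min_eq_left (hxc.trans hcd.le)]⟩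
  by_contra! hcx
  have : c < min x d := lt_min hcx hcd
  rw [← h, min_eq_right hcx.le] at this
  exact this.false

theorem one_sub_div_one_sub_mul_lt_one {δ δE : ℝ} (hδ0 : 0 < δ) (hδ1 : δ < 1) (hδE1 : δE < 1) :
    (1 - δ) / (1 - δ * δE) < 1 := by
  have hδδE : δ * δE < δ := mul_lt_of_lt_one_right hδ0 hδE1
  rw [div_lt_one (by linarith)]
  linarith

/-- The ARQ secret key rate is at most the MDS-exp secret key rate, with
equality iff `D ≤ 1 - δ`. -/
theorem ARQ_le_MDS_key_rate (δ δE : ℝ)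
    (hδ0 : 0 < δ) (hδ1 : δ < 1) (hδE0 : 0 < δE) (hδE1 : δE < 1) :
    ∀ D : ℝ, 0 ≤ D →
      min (D * (1 - δ) * δE / (1 - δ * δE)) ((1 - δ) ^ 2 * δE / (1 - δ * δE)) ≤
        min (D * δE * (1 - δ) / (1 - δ * δE)) ((1 - δ) * δE) ∧
      (min (D * (1 - δ) * δE / (1 - δ * δE)) ((1 - δ) ^ 2 * δE / (1 - δ * δE)) =
        min (D * δE * (1 - δ) / (1 - δ * δE)) ((1 - δ) * δE) ↔ D ≤ 1 - δ) := by
  intro D _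
  have hδ : 0 < 1 - δ := sub_pos.mpr hδ1
  have hden : 0 < 1 - δ * δE := by nlinarith
  set a := (1 - δ) * δE / (1 - δ * δE)
  have ha : 0 < a := by positivity
  have hcap : (1 - δ) * a < (1 - δ) * δE := by
    calc (1 - δ) * a = (1 - δ) * δE * ((1 - δ) / (1 - δ * δE)) := by ring
      _ < (1 - δ) * δE * 1 :=
        mul_lt_mul_of_pos_left (one_sub_div_one_sub_mul_lt_one hδ0 hδ1 hδE1) (by positivity)
      _ = (1 - δ) * δE := mul_one _
  have hARQ : D * (1 - δ) * δE / (1 - δ * δE) = D * a := by ring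
  have hARQcap : (1 - δ) ^ 2 * δE / (1 - δ * δE) = (1 - δ) * a := by ring
  have hMDS : D * δE * (1 - δ) / (1 - δ * δE) = D * a := by ring
  rw [hARQ, hARQcap, hMDS, min_eq_min_iff_of_lt hcap, mul_le_mul_iff_of_pos_right ha]
  exact ⟨min_le_min_left _ hcap.le, Iff.rfl⟩
end

section
/- Let N ≥ 1 and for each j ∈ {1,...,N} let 0 < δ_j < 1 and 0 < δ_{jE} < 1, and suppose each node has unlimited private randomness (so only the constraints ((1-δ_{jE})/(1-δ_j·δ_{jE}))·m ≤ k_j and k_j/((1-δ_j)·δ_{jE}) + m/(1-δ_j) ≤ 1 with k_j, m ≥ 0 remain). Then the optimal value of the resulting LP (maximize m) equals min over j of (1-δ_j)·δ_{jE}·(1-δ_j·δ_{jE})/(1-δ_j·δ_{jE}²), i.e., the minimum of the per-hop secret message capacities. -/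
/-!
Eliminating the key rate hop by hop: on hop `j` the two constraints combine, through the identity
`(1 - δE) / (1 - δ δE) + δE = (1 - δ δE²) / (1 - δ δE)`, into the single bound
`m ≤ (1 - δ) δE (1 - δ δE) / (1 - δ δE²)`, and the smallest admissible key rate
`k = (1 - δE) / (1 - δ δE) · m` attains it. Hence the feasible message rates form the interval
from `0` to the minimum of the per-hop capacities.
-/

-- `a` and `b` stand for the erasure probabilities `δ_j` and `δ_{jE}` of one hop.
noncomputable def hopCapacity (a b : ℝ) : ℝ := (1 - a) * b * (1 - a * b) / (1 - a * b ^ 2)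

def HopFeasible (a b m k : ℝ) : Prop :=
  (1 - b) / (1 - a * b) * m ≤ k ∧ k / ((1 - a) * b) + m / (1 - a) ≤ 1 ∧ 0 ≤ k

section Hop

variable {a b : ℝ}

theorem one_sub_mul_pos_and_one_sub_mul_sq_pos (ha : a < 1) (hb : 0 < b) (hb1 : b ≤ 1) :
    0 < 1 - a * b ∧ 0 < 1 - a * b ^ 2 := by
  constructor <;>
    nlinarith [mul_lt_mul_of_pos_right ha hb, mul_lt_mul_of_pos_right ha (pow_pos hb 2)]

theorem hopCapacity_pos (ha : a < 1) (hb : 0 < b) (hb1 : b ≤ 1) : 0 < hopCapacity a b := by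
  obtain ⟨hab, hab2⟩ := one_sub_mul_pos_and_one_sub_mul_sq_pos ha hb hb1
  unfold hopCapacity
  exact div_pos (mul_pos (mul_pos (by linarith) hb) hab) hab2

theorem one_sub_div_one_sub_mul_add (hab : 1 - a * b ≠ 0) :
    (1 - b) / (1 - a * b) + b = (1 - a * b ^ 2) / (1 - a * b) := by
  rw [div_add' _ _ _ hab]
  ring

theorem minKey_div_add_div_eq_div_hopCapacity (ha : a < 1) (hb : 0 < b) (hb1 : b ≤ 1) (m : ℝ) :
    (1 - b) / (1 - a * b) * m / ((1 - a) * b) + m / (1 - a) = m / hopCapacity a b := by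
  obtain ⟨hab, hab2⟩ := one_sub_mul_pos_and_one_sub_mul_sq_pos ha hb hb1
  have ha' : 1 - a ≠ 0 := by linarith
  calc _ = ((1 - b) / (1 - a * b) + b) * m / ((1 - a) * b) := by field_simp
    _ = m / hopCapacity a b := by
      rw [one_sub_div_one_sub_mul_add hab.ne', hopCapacity]
      field_simp

theorem exists_hopFeasible_iff (ha : a < 1) (hb : 0 < b) (hb1 : b ≤ 1) {m : ℝ} (hm : 0 ≤ m) :
    (∃ k, HopFeasible a b m k) ↔ m ≤ hopCapacity a b := by
  have hcap := hopCapacity_pos ha hb hb1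
  have hsum := minKey_div_add_div_eq_div_hopCapacity ha hb hb1 m
  rw [← div_le_one hcap, ← hsum]
  constructor
  · rintro ⟨k, hk_min, hk_rate, -⟩
    have hden : 0 ≤ (1 - a) * b := mul_nonneg (by linarith) hb.le
    calc _ ≤ k / ((1 - a) * b) + m / (1 - a) := by gcongr
      _ ≤ 1 := hk_rate
  · intro hle
    have hab := (one_sub_mul_pos_and_one_sub_mul_sq_pos ha hb hb1).1
    have hb1' : 0 ≤ 1 - b := by linarith
    exact ⟨_, le_rfl, hle, by positivity⟩

end Hop

/-- One-Eve line network with unlimited private randomness at every node: the LP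
optimum equals the minimum of the per-hop secret message capacities. -/
theorem oneEve_unlimited_randomness_LP (N : ℕ) (hN : 1 ≤ N) (δ δE : ℕ → ℝ)
    (hδ : ∀ j ∈ Finset.Icc 1 N, 0 < δ j ∧ δ j < 1)
    (hδE : ∀ j ∈ Finset.Icc 1 N, 0 < δE j ∧ δE j < 1) :
    IsGreatest {m : ℝ | ∃ k : ℕ → ℝ, 0 ≤ m ∧ ∀ j ∈ Finset.Icc 1 N,
        (1 - δE j) / (1 - δ j * δE j) * m ≤ k j ∧
        k j / ((1 - δ j) * δE j) + m / (1 - δ j) ≤ 1 ∧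
        0 ≤ k j}
      ((Finset.Icc 1 N).inf' (Finset.nonempty_Icc.mpr hN)
        (fun j => (1 - δ j) * δE j * (1 - δ j * δE j) / (1 - δ j * δE j ^ 2))) := by
  change IsGreatest
    {m : ℝ | ∃ k : ℕ → ℝ, 0 ≤ m ∧ ∀ j ∈ Finset.Icc 1 N, HopFeasible (δ j) (δE j) m (k j)}
    ((Finset.Icc 1 N).inf' (Finset.nonempty_Icc.mpr hN) fun j => hopCapacity (δ j) (δE j))
  set M := (Finset.Icc 1 N).inf' (Finset.nonempty_Icc.mpr hN) fun j => hopCapacity (δ j) (δE j)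
  have hM : 0 ≤ M := ((Finset.lt_inf'_iff _).2 fun j hj =>
    hopCapacity_pos (hδ j hj).2 (hδE j hj).1 (hδE j hj).2.le).le
  have hop_iff {m : ℝ} (hm : 0 ≤ m) {j : ℕ} (hj : j ∈ Finset.Icc 1 N) :=
    exists_hopFeasible_iff (hδ j hj).2 (hδE j hj).1 (hδE j hj).2.le hm
  suffices hfeas : {m : ℝ | ∃ k : ℕ → ℝ, 0 ≤ m ∧ ∀ j ∈ Finset.Icc 1 N,
      HopFeasible (δ j) (δE j) m (k j)} = Set.Icc 0 M by
    rw [hfeas]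
    exact isGreatest_Icc hM
  refine Set.ext fun m => ⟨?_, ?_⟩
  · rintro ⟨k, hm, hk⟩
    exact ⟨hm, (Finset.le_inf'_iff _ _).2 fun j hj => (hop_iff hm hj).1 ⟨k j, hk j hj⟩⟩
  · rintro ⟨hm, hle⟩
    choose! k hk using fun j hj => (hop_iff hm hj).2 ((Finset.le_inf'_iff _ _).1 hle j hj)
    exact ⟨k, hm, hk⟩
end

section
/- Let N = 1 with δ, δ_E ∈ (0,1) and unlimited source randomness D = +∞ (i.e., drop the randomness constraint). Then the All-Eves LP for N = 1 — maximize m subject to ((1-δ_E)/(1-δ·δ_E))·m ≤ k - d, k/((1-δ)·δ_E) + m/(1-δ) ≤ 1, k, m, d ≥ 0 — has optimal value (1-δ)·δ_E·(1-δ·δ_E)/(1-δ·δ_E²), attained at d = 0. -/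
/-!
With `a = (1-δE)/(1-δ·δE)`, `b = (1-δ)·δE` and `c = 1-δ` the LP reads: maximize `m` subject to
`a·m ≤ k - d` and `k/b + m/c ≤ 1`. Taking `d = 0` and `k = a·m` is optimal, which leaves
`m·(a/b + 1/c) ≤ 1`, so the optimum is `b·c/(a·c + b)`; this simplifies to the stated value.
-/

def lpFeasibleRates (a b c : ℝ) : Set ℝ :=
  {m : ℝ | ∃ k d : ℝ, a * m ≤ k - d ∧ k / b + m / c ≤ 1 ∧ 0 ≤ k ∧ 0 ≤ m ∧ 0 ≤ d}

section LP

variable {a b c : ℝ}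

theorem lp_budget_tight_at_optimum (hb : 0 < b) (hc : 0 < c) (ha : 0 ≤ a) :
    a * (b * c / (a * c + b)) / b + b * c / (a * c + b) / c = 1 := by
  have : 0 < a * c + b := by positivity
  field_simp

theorem le_of_mem_lpFeasibleRates (hb : 0 < b) (hc : 0 < c) (ha : 0 ≤ a) {m : ℝ}
    (hm : m ∈ lpFeasibleRates a b c) : m ≤ b * c / (a * c + b) := by
  obtain ⟨k, d, hkd, hbudget, -, -, hd⟩ := hm
  have hk : a * m / b ≤ k / b := div_le_div_of_nonneg_right (by linarith) hb.le
  have hsum : m * (a * c + b) / (b * c) ≤ 1 := by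
    calc m * (a * c + b) / (b * c) = a * m / b + m / c := by field_simp
      _ ≤ 1 := by linarith
  rw [le_div_iff₀ (by positivity)]
  rwa [div_le_one (by positivity)] at hsum

theorem isGreatest_lpFeasibleRates (hb : 0 < b) (hc : 0 < c) (ha : 0 ≤ a) :
    IsGreatest (lpFeasibleRates a b c) (b * c / (a * c + b)) := by
  refine ⟨⟨a * (b * c / (a * c + b)), 0, by rw [sub_zero], (lp_budget_tight_at_optimum hb hc ha).le,
    by positivity, by positivity, le_rfl⟩, fun m hm => le_of_mem_lpFeasibleRates hb hc ha hm⟩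

end LP

theorem allEves_one_hop_LP_general (δ δE : ℝ)
    (hδ1 : δ < 1) (hδE0 : 0 < δE) (hδE1 : δE < 1) :
    IsGreatest {m : ℝ | ∃ k d : ℝ,
        (1 - δE) / (1 - δ * δE) * m ≤ k - d ∧
        k / ((1 - δ) * δE) + m / (1 - δ) ≤ 1 ∧
        0 ≤ k ∧ 0 ≤ m ∧ 0 ≤ d}
      ((1 - δ) * δE * (1 - δ * δE) / (1 - δ * δE ^ 2)) ∧
    ∃ k : ℝ,
      (1 - δE) / (1 - δ * δE) * ((1 - δ) * δE * (1 - δ * δE) / (1 - δ * δE ^ 2))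
          ≤ k - 0 ∧
      k / ((1 - δ) * δE) +
          (1 - δ) * δE * (1 - δ * δE) / (1 - δ * δE ^ 2) / (1 - δ) ≤ 1 ∧
      0 ≤ k := by
  have hc : 0 < 1 - δ := by linarith
  have hb : 0 < (1 - δ) * δE := by positivity
  -- `1 - δ·δE = (1 - δE) + δE·(1 - δ)`, and likewise with `δE²`
  have hdenom : 0 < 1 - δ * δE := by nlinarith
  have hdenom₂ : 0 < 1 - δ * δE ^ 2 := by nlinarith
  have ha : 0 ≤ (1 - δE) / (1 - δ * δE) := div_nonneg (by linarith) hdenom.le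
  have hvalue : (1 - δ) * δE * (1 - δ * δE) / (1 - δ * δE ^ 2) =
      (1 - δ) * δE * (1 - δ) /
        ((1 - δE) / (1 - δ * δE) * (1 - δ) + (1 - δ) * δE) := by
    have hsum : (1 - δE) / (1 - δ * δE) * (1 - δ) + (1 - δ) * δE =
        (1 - δ) * (1 - δ * δE ^ 2) / (1 - δ * δE) := by
      rw [div_mul_eq_mul_div, div_add' _ _ _ hdenom.ne']
      ring
    rw [hsum]
    field_simp
  rw [hvalue]
  exact ⟨isGreatest_lpFeasibleRates hb hc ha, _, by rw [sub_zero], (lp_budget_tight_at_optimum hb hc ha).le,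
    by positivity⟩

/-- The one-hop All-Eves LP with unlimited source randomness has optimal value
`(1-δ)·δE·(1-δ·δE)/(1-δ·δE²)`, attained at `d = 0`. -/
theorem allEves_one_hop_LP (δ δE : ℝ)
    (hδ0 : 0 < δ) (hδ1 : δ < 1) (hδE0 : 0 < δE) (hδE1 : δE < 1) :
    IsGreatest {m : ℝ | ∃ k d : ℝ,
        (1 - δE) / (1 - δ * δE) * m ≤ k - d ∧
        k / ((1 - δ) * δE) + m / (1 - δ) ≤ 1 ∧
        0 ≤ k ∧ 0 ≤ m ∧ 0 ≤ d}
      ((1 - δ) * δE * (1 - δ * δE) / (1 - δ * δE ^ 2)) ∧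
    ∃ k : ℝ,
      (1 - δE) / (1 - δ * δE) * ((1 - δ) * δE * (1 - δ * δE) / (1 - δ * δE ^ 2))
          ≤ k - 0 ∧
      k / ((1 - δ) * δE) +
          (1 - δ) * δE * (1 - δ * δE) / (1 - δ * δE ^ 2) / (1 - δ) ≤ 1 ∧
      0 ≤ k :=
  allEves_one_hop_LP_general δ δE hδ1 hδE0 hδE1
end

section
/- Let X, Y, Z, S, U, W be random variables (over finite alphabets) with joint distribution factorizing so that for each i, S_i is independent of (U, W, Y^{i-1}, Z^{i-1}, S^{i-1}, X_i), where X_i is a deterministic function of (W, U, S^{i-1}), and given S_i the pair (Y_i, Z_i) is determined: Y_i = X_i if S_i indicates reception (probability 1-δ) and Y_i = erasure otherwise, Z_i = X_i with probability 1-δ_E independently. Then H(U) ≥ (1-δ·δ_E)·Σ_{i=1}^n H(X_i | Y^{i-1} Z^{i-1} S^{i-1} W). -/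
/-!
With `V k = (Y^k, Z^k, S^k, W)` (the first `k` symbols of each history) put
`E k = H(U | V k)`. At time `i`, the state `Sᵢ` is independent of `(U, V i)` and `Xᵢ` is a
function of `(U, V i)`, so
`E i - E (i+1) = H(Yᵢ Zᵢ Sᵢ | V i) - H(Yᵢ Zᵢ Sᵢ | U, V i) = ∑ₛ q(s) H(eₛ(Xᵢ) | V i)`,
where `q(s)` is the probability of state `s` and `eₛ` its erasure pattern. The pattern is
injective unless both outputs are erased, which has probability `δ δE`, so this is
`(1 - δ δE) H(Xᵢ | V i)`.
Telescoping, `(1 - δ δE) ∑ᵢ H(Xᵢ | V i) = E 0 - E n ≤ H(U)`.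
-/

open Finset

set_option synthInstance.maxSize 2000
set_option synthInstance.maxHeartbeats 2000000
set_option maxHeartbeats 2000000

/-- Shannon entropy (in nats) of a random variable `f` on a finite probability
space with pmf `p`. -/
noncomputable def ent {Ω α : Type} [Fintype Ω] [Fintype α] [DecidableEq α]
    (p : Ω → ℝ) (f : Ω → α) : ℝ :=
  ∑ a : α, Real.negMulLog (∑ ω ∈ Finset.univ.filter (fun ω => f ω = a), p ω)

/-- Conditional entropy `H(f | g) = H(f, g) - H(g)`. -/
noncomputable def condEnt {Ω α β : Type} [Fintype Ω] [Fintype α] [Fintype β]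
    [DecidableEq α] [DecidableEq β] (p : Ω → ℝ) (f : Ω → α) (g : Ω → β) : ℝ :=
  ent p (fun ω => (f ω, g ω)) - ent p g

/-- The prefix `(f 1, …, f (i-1))` of a process, encoded as a function defined
on all of `Fin n` which is `none` from time `i` on. -/
def histPrefix {n : ℕ} {Ω β : Type} (f : Fin n → Ω → β) (i : Fin n) (ω : Ω) :
    Fin n → Option β :=
  fun j => if j < i then some (f j ω) else none

open Real

section Entropy

variable {Ω α β γ : Type} [Fintype Ω] [DecidableEq α] [DecidableEq β] [DecidableEq γ]
  {p : Ω → ℝ}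

noncomputable def law (p : Ω → ℝ) (f : Ω → α) (a : α) : ℝ :=
  ∑ ω ∈ univ.filter (fun ω => f ω = a), p ω

lemma ent_eq_sum_law [Fintype α] (p : Ω → ℝ) (f : Ω → α) :
    ent p f = ∑ a, negMulLog (law p f a) := rfl

lemma law_nonneg (hp : ∀ ω, 0 ≤ p ω) (f : Ω → α) (a : α) : 0 ≤ law p f a :=
  sum_nonneg fun ω _ => hp ω

lemma sum_law [Fintype α] (p : Ω → ℝ) (f : Ω → α) : ∑ a, law p f a = ∑ ω, p ω :=
  sum_fiberwise _ _ _

lemma law_eq_zero_of_notMem_range {f : Ω → α} {a : α} (ha : a ∉ Set.range f) :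
    law p f a = 0 :=
  sum_eq_zero fun ω hω => absurd ⟨ω, (mem_filter.1 hω).2⟩ ha

lemma sum_law_pair_left [Fintype α] (p : Ω → ℝ) (f : Ω → α) (g : Ω → β) (b : β) :
    ∑ a, law p (fun ω => (f ω, g ω)) (a, b) = law p g b := by
  rw [law, ← sum_fiberwise _ f]
  refine sum_congr rfl fun a _ => ?_
  rw [law, filter_filter]
  exact sum_congr (filter_congr fun ω _ => by simp [and_comm]) fun _ _ => rfl

lemma sum_law_pair_right [Fintype β] (p : Ω → ℝ) (f : Ω → α) (g : Ω → β) (a : α) :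
    ∑ b, law p (fun ω => (f ω, g ω)) (a, b) = law p f a := by
  rw [law, ← sum_fiberwise _ g]
  refine sum_congr rfl fun b _ => ?_
  rw [law, filter_filter]
  exact sum_congr (filter_congr fun ω _ => by simp) fun _ _ => rfl

lemma ent_comp_of_injOn [Fintype α] [Fintype β] {f : Ω → α} {φ : α → β}
    (hφ : Set.InjOn φ (Set.range f)) : ent p (fun ω => φ (f ω)) = ent p f := by
  have hlaw : ∀ ω₀, law p (fun ω => φ (f ω)) (φ (f ω₀)) = law p f (f ω₀) := fun ω₀ =>
    sum_congr (filter_congr fun ω _ => ⟨fun h => hφ ⟨ω, rfl⟩ ⟨ω₀, rfl⟩ h, congrArg φ⟩)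
      fun _ _ => rfl
  rw [ent_eq_sum_law, ent_eq_sum_law, ← sum_subset (subset_univ (univ.image f))]
  · refine (sum_of_injOn φ ?_ (fun _ _ => mem_univ _) (fun b _ hb => ?_) ?_).symm
    · exact hφ.mono (by simp)
    · rw [law_eq_zero_of_notMem_range, negMulLog_zero]
      rintro ⟨ω, rfl⟩
      exact hb ⟨f ω, by simp⟩
    · simp only [mem_image, mem_univ, true_and]
      rintro _ ⟨ω, rfl⟩
      rw [hlaw]
  · intro a _ ha
    rw [law_eq_zero_of_notMem_range (by simpa using ha), negMulLog_zero]

lemma ent_congr_of_eq_iff [Fintype α] [Fintype β] {f : Ω → α} {g : Ω → β}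
    (h : ∀ ω ω', f ω = f ω' ↔ g ω = g ω') : ent p f = ent p g := by
  rcases isEmpty_or_nonempty Ω with hΩ | hΩ
  · simp [ent_eq_sum_law, law]
  have hg : ∀ ω, g ω = g (Function.invFun f (f ω)) := fun ω =>
    ((h _ _).1 (Function.invFun_eq ⟨ω, rfl⟩).symm)
  rw [funext hg, ent_comp_of_injOn (φ := fun a => g (Function.invFun f a))]
  rintro _ ⟨ω, rfl⟩ _ ⟨ω', rfl⟩ he
  exact (h _ _).2 (by simpa only [← hg] using he)

lemma law_pair_le_law_right [Fintype α] (hp : ∀ ω, 0 ≤ p ω) (f : Ω → α) (g : Ω → β) (a : α)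
    (b : β) : law p (fun ω => (f ω, g ω)) (a, b) ≤ law p g b :=
  sum_law_pair_left p f g b ▸
    single_le_sum (fun a' _ => law_nonneg hp (fun ω => (f ω, g ω)) (a', b)) (mem_univ a)

lemma law_mul_div_law_eq_law_pair [Fintype α] (hp : ∀ ω, 0 ≤ p ω) (f : Ω → α) (g : Ω → β)
    (a : α) (b : β) :
    law p g b * (law p (fun ω => (f ω, g ω)) (a, b) / law p g b) =
      law p (fun ω => (f ω, g ω)) (a, b) := by
  rcases (law_nonneg hp g b).eq_or_lt with hb | hb
  · rw [← hb, zero_mul]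
    exact le_antisymm (hb ▸ law_pair_le_law_right hp f g a b) (law_nonneg hp _ _) |>.symm
  · exact mul_div_cancel₀ _ hb.ne'

-- Where `law p g b = 0` the inner sum is junk (`x / 0 = 0`), but its weight is `0`.
lemma condEnt_eq_sum [Fintype α] [Fintype β] (hp : ∀ ω, 0 ≤ p ω) (f : Ω → α) (g : Ω → β) :
    condEnt p f g = ∑ b, law p g b *
      ∑ a, negMulLog (law p (fun ω => (f ω, g ω)) (a, b) / law p g b) := by
  rw [condEnt, ent_eq_sum_law, ent_eq_sum_law, Fintype.sum_prod_type_right, sub_eq_iff_eq_add,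
    ← sum_add_distrib]
  refine sum_congr rfl fun b _ => ?_
  set P := fun a => law p (fun ω => (f ω, g ω)) (a, b)
  set Q := law p g b
  have hsum : (∑ a, P a / Q) * negMulLog Q = negMulLog Q := by
    rcases eq_or_ne Q 0 with hQ | hQ
    · rw [hQ, negMulLog_zero, mul_zero]
    · rw [← sum_div, sum_law_pair_left, div_self hQ, one_mul]
  calc ∑ a, negMulLog (P a) = ∑ a, negMulLog (Q * (P a / Q)) :=
        sum_congr rfl fun a _ => by rw [law_mul_div_law_eq_law_pair hp f g a b]
    _ = Q * ∑ a, negMulLog (P a / Q) + negMulLog Q := by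
        simp_rw [negMulLog_mul, sum_add_distrib, ← sum_mul, ← mul_sum, hsum, add_comm]

lemma condEnt_nonneg [Fintype α] [Fintype β] (hp : ∀ ω, 0 ≤ p ω) (f : Ω → α) (g : Ω → β) :
    0 ≤ condEnt p f g := by
  rw [condEnt_eq_sum hp]
  refine sum_nonneg fun b _ => mul_nonneg (law_nonneg hp g b) (sum_nonneg fun a _ => ?_)
  exact negMulLog_nonneg (div_nonneg (law_nonneg hp _ _) (law_nonneg hp g b))
    (div_le_one_of_le₀ (law_pair_le_law_right hp f g a b) (law_nonneg hp g b))

-- Jensen's inequality for the concave `negMulLog`, with weights `law p g`.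
lemma condEnt_le_ent [Fintype α] [Fintype β] (hp : ∀ ω, 0 ≤ p ω) (hp1 : ∑ ω, p ω = 1)
    (f : Ω → α) (g : Ω → β) : condEnt p f g ≤ ent p f := by
  rw [condEnt_eq_sum hp, ent_eq_sum_law]
  simp_rw [mul_sum]
  rw [sum_comm]
  refine sum_le_sum fun a _ => ?_
  have hjensen := concaveOn_negMulLog.le_map_sum (t := univ) (w := law p g)
    (p := fun b => law p (fun ω => (f ω, g ω)) (a, b) / law p g b)
    (fun b _ => law_nonneg hp g b) (by rw [sum_law, hp1])
    (fun b _ => Set.mem_Ici.2 (div_nonneg (law_nonneg hp _ _) (law_nonneg hp g b)))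
  simp only [smul_eq_mul, law_mul_div_law_eq_law_pair hp, sum_law_pair_right] at hjensen
  exact hjensen

lemma condEnt_congr_right_of_eq_iff [Fintype α] [Fintype β] [Fintype γ] (f : Ω → α)
    {g : Ω → β} {g' : Ω → γ} (h : ∀ ω ω', g ω = g ω' ↔ g' ω = g' ω') :
    condEnt p f g = condEnt p f g' := by
  rw [condEnt, condEnt, ent_congr_of_eq_iff h,
    ent_congr_of_eq_iff (g := fun ω => (f ω, g' ω)) fun ω ω' => by simp only [Prod.mk.injEq, h]]

lemma condEnt_comp_of_injective [Fintype α] [Fintype β] [Fintype γ] {φ : α → γ}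
    (hφ : Function.Injective φ) (f : Ω → α) (g : Ω → β) :
    condEnt p (fun ω => φ (f ω)) g = condEnt p f g := by
  rw [condEnt, condEnt, ent_congr_of_eq_iff (g := fun ω => (f ω, g ω))
    fun ω ω' => by simp only [Prod.mk.injEq, hφ.eq_iff]]

lemma condEnt_const [Fintype α] [Fintype β] (c : α) (g : Ω → β) :
    condEnt p (fun _ => c) g = 0 := by
  rw [condEnt, ent_congr_of_eq_iff (g := g) fun ω ω' => by simp only [Prod.mk.injEq, true_and],
    sub_self]

end Entropy

section Independence

variable {Ω α β γ : Type} [Fintype Ω] [DecidableEq α] [DecidableEq β] [DecidableEq γ]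
  {p : Ω → ℝ} {S : Ω → γ} {q : γ → ℝ} {V : Ω → α}

def IndepWithLaw (p : Ω → ℝ) (S : Ω → γ) (q : γ → ℝ) (V : Ω → α) : Prop :=
  ∀ s a, law p (fun ω => (S ω, V ω)) (s, a) = q s * law p V a

lemma law_comp [Fintype α] (p : Ω → ℝ) (V : Ω → α) (φ : α → β) (b : β) :
    law p (fun ω => φ (V ω)) b = ∑ a ∈ univ.filter (fun a => φ a = b), law p V a := by
  rw [law, ← sum_fiberwise_of_maps_to (g := V) (t := univ.filter fun a => φ a = b)
    (fun ω hω => by simpa using hω)]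
  refine sum_congr rfl fun a ha => ?_
  rw [law, filter_filter]
  refine sum_congr (filter_congr fun ω _ => ?_) fun _ _ => rfl
  simp only [mem_filter, mem_univ, true_and] at ha
  constructor
  · exact And.right
  · rintro rfl; exact ⟨ha, rfl⟩

lemma IndepWithLaw.comp [Fintype α] [Fintype γ] (h : IndepWithLaw p S q V) (φ : α → β) :
    IndepWithLaw p S q (fun ω => φ (V ω)) := fun s b => by
  rw [show (fun ω => (S ω, φ (V ω))) = fun ω => Prod.map id φ (S ω, V ω) from rfl,
    law_comp p (fun ω => (S ω, V ω)) (Prod.map id φ), law_comp, mul_sum, sum_filter,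
    sum_filter, Fintype.sum_prod_type]
  simp only [Prod.map_apply, id_eq, Prod.mk.injEq, ite_and]
  rw [Fintype.sum_eq_single s fun x hx => by simp [hx]]
  exact sum_congr rfl fun a _ => by simp [h s a]

lemma indepWithLaw_of_forall_bool
    (h : ∀ s, ∀ T : α → Bool,
      ∑ ω ∈ univ.filter (fun ω => S ω = s ∧ T (V ω) = true), p ω =
        q s * ∑ ω ∈ univ.filter (fun ω => T (V ω) = true), p ω) :
    IndepWithLaw p S q V := fun s a => by
  simpa [law, Prod.ext_iff] using h s (fun a' => decide (a' = a))

lemma IndepWithLaw.sum_eq_one [Fintype α] [Fintype γ] (h : IndepWithLaw p S q V)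
    (hp1 : ∑ ω, p ω = 1) : ∑ s, q s = 1 := by
  have htotal := sum_law p (fun ω => (S ω, V ω))
  simp only [Fintype.sum_prod_type, h _ _, ← mul_sum, sum_law, hp1, mul_one] at htotal
  exact htotal

lemma IndepWithLaw.ent_pair [Fintype α] [Fintype β] [Fintype γ] (h : IndepWithLaw p S q V)
    (hp1 : ∑ ω, p ω = 1) (F : γ → α → β) :
    ent p (fun ω => (S ω, F (S ω) (V ω))) =
      ∑ s, negMulLog (q s) + ∑ s, q s * ent p (fun ω => F s (V ω)) := by
  have hlaw : ∀ s b, law p (fun ω => (S ω, F (S ω) (V ω))) (s, b) =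
      q s * law p (fun ω => F s (V ω)) b := fun s b => by
    rw [← h.comp (F s) s b]
    refine sum_congr (filter_congr fun ω _ => ?_) fun _ _ => rfl
    simp only [Prod.mk.injEq]
    constructor <;> rintro ⟨rfl, hb⟩ <;> exact ⟨rfl, hb⟩
  rw [ent_eq_sum_law, Fintype.sum_prod_type, ← sum_add_distrib]
  refine sum_congr rfl fun s _ => ?_
  simp_rw [hlaw, negMulLog_mul, sum_add_distrib, ← sum_mul, ← mul_sum, sum_law, hp1, one_mul,
    ent_eq_sum_law]

end Independence

section Channel

variable {Ω 𝒰 𝒱 A B γ : Type} [Fintype Ω] [Fintype 𝒰] [Fintype 𝒱] [Fintype A] [Fintype B]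
  [Fintype γ] [DecidableEq 𝒰] [DecidableEq 𝒱] [DecidableEq A] [DecidableEq B] [DecidableEq γ]
  {p : Ω → ℝ}

lemma condEnt_sub_condEnt_channel_eq_sum (hp1 : ∑ ω, p ω = 1) {U : Ω → 𝒰} {V : Ω → 𝒱} {X : Ω → A}
    {S : Ω → γ} {q : γ → ℝ} (hS : IndepWithLaw p S q (fun ω => (U ω, V ω))) (Φ : 𝒰 → 𝒱 → A)
    (hX : ∀ ω, X ω = Φ (U ω) (V ω)) (e : γ → A → B) :
    condEnt p U V - condEnt p U (fun ω => (e (S ω) (X ω), S ω, V ω)) =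
      ∑ s, q s * condEnt p (fun ω => e s (X ω)) V := by
  have hSX : IndepWithLaw p S q (fun ω => (X ω, V ω)) := by
    simpa only [← hX] using hS.comp (fun t => (Φ t.1 t.2, t.2))
  have hjoint : ent p (fun ω => (U ω, e (S ω) (X ω), S ω, V ω)) =
      ∑ s, negMulLog (q s) + ent p (fun ω => (U ω, V ω)) := by
    rw [ent_congr_of_eq_iff (g := fun ω => (S ω, U ω, V ω)), hS.ent_pair hp1 (fun _ t => t),
      ← sum_mul, hS.sum_eq_one hp1, one_mul]
    intro ω ω'
    simp only [Prod.mk.injEq, hX]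
    constructor
    · tauto
    · rintro ⟨hs, hu, hv⟩
      simp only [hs, hu, hv, and_self]
  have hobs : ent p (fun ω => (e (S ω) (X ω), S ω, V ω)) =
      ∑ s, negMulLog (q s) + ∑ s, q s * ent p (fun ω => (e s (X ω), V ω)) := by
    rw [ent_congr_of_eq_iff (g := fun ω => (S ω, e (S ω) (X ω), V ω)),
      hSX.ent_pair hp1 (fun s t => (e s t.1, t.2))]
    intro ω ω'
    simp only [Prod.mk.injEq]
    tauto
  simp only [condEnt, mul_sub, sum_sub_distrib, ← sum_mul, hS.sum_eq_one hp1, hjoint, hobs]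
  ring

end Channel

section ErasureChannel

def erasureOutput {A : Type} (s : Bool × Bool) (x : A) : Option A × Option A :=
  (if s.1 then some x else none, if s.2 then some x else none)

def stateLaw (δ δE : ℝ) (s : Bool × Bool) : ℝ :=
  (if s.1 then 1 - δ else δ) * (if s.2 then 1 - δE else δE)

lemma erasureOutput_injective {A : Type} {s : Bool × Bool} (hs : s ≠ (false, false)) :
    Function.Injective (erasureOutput (A := A) s) := by
  rcases s with ⟨_ | _, _ | _⟩ <;> simp_all [Function.Injective, erasureOutput]

variable {Ω A 𝒱 : Type} [Fintype Ω] [Fintype A] [Fintype 𝒱] [DecidableEq A] [DecidableEq 𝒱]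
  {p : Ω → ℝ}

lemma sum_stateLaw_mul_condEnt_erasureOutput (δ δE : ℝ) (X : Ω → A) (V : Ω → 𝒱) :
    ∑ s, stateLaw δ δE s * condEnt p (fun ω => erasureOutput s (X ω)) V =
      (1 - δ * δE) * condEnt p X V := by
  simp only [Fintype.sum_prod_type, Fintype.sum_bool]
  rw [condEnt_comp_of_injective (erasureOutput_injective (by decide)),
    condEnt_comp_of_injective (erasureOutput_injective (by decide)),
    condEnt_comp_of_injective (erasureOutput_injective (by decide)),
    show erasureOutput (A := A) (false, false) = fun _ => (none, none) from rfl, condEnt_const]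
  simp only [stateLaw, if_true, if_false, Bool.false_eq_true]
  ring

end ErasureChannel

section History

variable {n : ℕ} {Ω β : Type}

-- `histPrefix` with the cutoff in `ℕ`, so that the full history (`k = n`) is available.
def histUpTo (f : Fin n → Ω → β) (k : ℕ) (ω : Ω) : Fin n → Option β :=
  fun j => if (j : ℕ) < k then some (f j ω) else none

lemma histPrefix_eq_histUpTo (f : Fin n → Ω → β) (i : Fin n) :
    histPrefix f i = histUpTo f i := by
  funext ω j
  simp only [histPrefix, histUpTo, Fin.lt_def]

lemma histUpTo_succ_eq_iff (f : Fin n → Ω → β) (i : Fin n) (ω ω' : Ω) :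
    histUpTo f (i + 1) ω = histUpTo f (i + 1) ω' ↔
      f i ω = f i ω' ∧ histUpTo f i ω = histUpTo f i ω' := by
  simp only [funext_iff, histUpTo]
  constructor
  · intro h
    refine ⟨by simpa using h i, fun j => ?_⟩
    have := h j
    split_ifs at this ⊢ with hj <;> first | rfl | omega
  · rintro ⟨hi, h⟩ j
    have := h j
    rcases lt_trichotomy (j : ℕ) i with hj | hj | hj
    · simpa [hj, Nat.lt_succ_of_lt hj] using this
    · simp [Fin.ext hj, hi]
    · simp [Nat.not_lt.2 hj]

end History

theorem randomness_bound_general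
    {Ω 𝒲 𝒰 A : Type} [Fintype Ω] [Fintype 𝒲] [Fintype 𝒰] [Fintype A]
    [DecidableEq 𝒲] [DecidableEq 𝒰] [DecidableEq A]
    (n : ℕ) (p : Ω → ℝ) (hp : ∀ ω, 0 ≤ p ω) (hp1 : ∑ ω, p ω = 1)
    (δ δE : ℝ)
    (W : Ω → 𝒲) (U : Ω → 𝒰) (X : Fin n → Ω → A)
    (S : Fin n → Ω → Bool × Bool) (Y Z : Fin n → Ω → Option A)
    -- the channel outputs are erasures of the input, governed by the state
    (hY : ∀ i ω, Y i ω = if (S i ω).1 then some (X i ω) else none)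
    (hZ : ∀ i ω, Z i ω = if (S i ω).2 then some (X i ω) else none)
    -- `Xᵢ` is a deterministic function of `(W, U, S^{i-1})`
    (hX : ∀ i : Fin n, ∃ g : 𝒲 × 𝒰 × (Fin n → Option (Bool × Bool)) → A,
      ∀ ω, X i ω = g (W ω, U ω, histPrefix S i ω))
    -- `Sᵢ` has the product Bernoulli law and is independent of
    -- `(W, U, Xᵢ, Y^{i-1}, Z^{i-1}, S^{i-1})`
    (hS : ∀ i : Fin n, ∀ b e : Bool,
      ∀ T : 𝒲 × 𝒰 × A × (Fin n → Option (Option A)) × (Fin n → Option (Option A)) ×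
          (Fin n → Option (Bool × Bool)) → Bool,
      (∑ ω ∈ Finset.univ.filter (fun ω => S i ω = (b, e) ∧
          T (W ω, U ω, X i ω, histPrefix Y i ω, histPrefix Z i ω,
            histPrefix S i ω) = true), p ω) =
        ((if b then 1 - δ else δ) * (if e then 1 - δE else δE)) *
          ∑ ω ∈ Finset.univ.filter (fun ω =>
            T (W ω, U ω, X i ω, histPrefix Y i ω, histPrefix Z i ω,
              histPrefix S i ω) = true), p ω) :
    ent p U ≥ (1 - δ * δE) *
      ∑ i : Fin n, condEnt p (X i) (fun ω =>
        (histPrefix Y i ω, histPrefix Z i ω, histPrefix S i ω, W ω)) := by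
  simp only [histPrefix_eq_histUpTo] at hX hS ⊢
  set V : ℕ → Ω → _ := fun k ω => (histUpTo Y k ω, histUpTo Z k ω, histUpTo S k ω, W ω)
  have hstep (i : Fin n) : condEnt p U (V i) - condEnt p U (V (i + 1)) =
      (1 - δ * δE) * condEnt p (X i) (V i) := by
    obtain ⟨g, hg⟩ := hX i
    have hindep : IndepWithLaw p (S i) (stateLaw δ δE) (fun ω =>
        (W ω, U ω, X i ω, histUpTo Y i ω, histUpTo Z i ω, histUpTo S i ω)) :=
      indepWithLaw_of_forall_bool fun ⟨b, e⟩ T => hS i b e T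
    have hout (ω : Ω) : erasureOutput (S i ω) (X i ω) = (Y i ω, Z i ω) := by
      rw [hY, hZ, erasureOutput]
    rw [condEnt_congr_right_of_eq_iff U (g := V (i + 1))
        (g' := fun ω => (erasureOutput (S i ω) (X i ω), S i ω, V i ω)),
      condEnt_sub_condEnt_channel_eq_sum (U := U) (V := V i) hp1
        (hindep.comp fun t => (t.2.1, t.2.2.2.1, t.2.2.2.2.1, t.2.2.2.2.2, t.1))
        (fun u v => g (v.2.2.2, u, v.2.2.1)) hg,
      sum_stateLaw_mul_condEnt_erasureOutput]
    intro ω ω'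
    simp only [V, hout, histUpTo_succ_eq_iff, Prod.mk.injEq]
    tauto
  have htelescope :=
    Fin.sum_univ_eq_sum_range (fun k => condEnt p U (V k) - condEnt p U (V (k + 1))) n
  rw [sum_range_sub'] at htelescope
  calc (1 - δ * δE) * ∑ i : Fin n, condEnt p (X i) (V i)
      = ∑ i : Fin n, (condEnt p U (V i) - condEnt p U (V (i + 1))) := by
        rw [mul_sum]
        exact sum_congr rfl fun i _ => (hstep i).symm
    _ = condEnt p U (V 0) - condEnt p U (V n) := htelescope
    _ ≤ ent p U := by linarith [condEnt_le_ent hp hp1 U (V 0), condEnt_nonneg hp U (V n)]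

/-- Lemma 2 of the paper (randomness bound): if the channel inputs `Xᵢ` are
deterministic functions of the message `W`, the private randomness `U` and the
feedback history, the outputs `Yᵢ, Zᵢ` are erasures of `Xᵢ` governed by the
state `Sᵢ = (receiver got it, Eve got it)`, and `Sᵢ` is i.i.d.
`(Bernoulli(1-δ), Bernoulli(1-δE))`, independent of the past and of
`(W, U, Xᵢ)`, then
`H(U) ≥ (1-δ·δE)·∑ᵢ H(Xᵢ | Y^{i-1} Z^{i-1} S^{i-1} W)`. -/
theorem randomness_bound
    {Ω 𝒲 𝒰 A : Type} [Fintype Ω] [Fintype 𝒲] [Fintype 𝒰] [Fintype A]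
    [DecidableEq 𝒲] [DecidableEq 𝒰] [DecidableEq A]
    (n : ℕ) (p : Ω → ℝ) (hp : ∀ ω, 0 ≤ p ω) (hp1 : ∑ ω, p ω = 1)
    (δ δE : ℝ) (hδ0 : 0 < δ) (hδ1 : δ < 1) (hδE0 : 0 < δE) (hδE1 : δE < 1)
    (W : Ω → 𝒲) (U : Ω → 𝒰) (X : Fin n → Ω → A)
    (S : Fin n → Ω → Bool × Bool) (Y Z : Fin n → Ω → Option A)
    -- the channel outputs are erasures of the input, governed by the state
    (hY : ∀ i ω, Y i ω = if (S i ω).1 then some (X i ω) else none)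
    (hZ : ∀ i ω, Z i ω = if (S i ω).2 then some (X i ω) else none)
    -- `Xᵢ` is a deterministic function of `(W, U, S^{i-1})`
    (hX : ∀ i : Fin n, ∃ g : 𝒲 × 𝒰 × (Fin n → Option (Bool × Bool)) → A,
      ∀ ω, X i ω = g (W ω, U ω, histPrefix S i ω))
    -- `Sᵢ` has the product Bernoulli law and is independent of
    -- `(W, U, Xᵢ, Y^{i-1}, Z^{i-1}, S^{i-1})`
    (hS : ∀ i : Fin n, ∀ b e : Bool,
      ∀ T : 𝒲 × 𝒰 × A × (Fin n → Option (Option A)) × (Fin n → Option (Option A)) ×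
          (Fin n → Option (Bool × Bool)) → Bool,
      (∑ ω ∈ Finset.univ.filter (fun ω => S i ω = (b, e) ∧
          T (W ω, U ω, X i ω, histPrefix Y i ω, histPrefix Z i ω,
            histPrefix S i ω) = true), p ω) =
        ((if b then 1 - δ else δ) * (if e then 1 - δE else δE)) *
          ∑ ω ∈ Finset.univ.filter (fun ω =>
            T (W ω, U ω, X i ω, histPrefix Y i ω, histPrefix Z i ω,
              histPrefix S i ω) = true), p ω) :
    ent p U ≥ (1 - δ * δE) *
      ∑ i : Fin n, condEnt p (X i) (fun ω =>
        (histPrefix Y i ω, histPrefix Z i ω, histPrefix S i ω, W ω)) :=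
  randomness_bound_general n p hp hp1 δ δE W U X S Y Z hY hZ hX hS
end

section
/- In the single-hop setting with erasure probabilities δ, δ_E ∈ (0,1), any secret key scheme satisfying uniformity H(K) > log|K| - ε, reliability Pr{K ≠ K̂} < ε, and secrecy I(K; Z^n S^n) < ε, has key rate satisfying n·R_SK ≤ H(Y^n S^n | Z^n S^n) + o(n). -/
open Finset

/-- Probability of an event described by a Boolean predicate, for a pmf `p` on a
finite sample space. -/
noncomputable def prOf {Ω : Type} [Fintype Ω] (p : Ω → ℝ) (A : Ω → Prop)
    [DecidablePred A] : ℝ :=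
  ∑ ω ∈ Finset.univ.filter A, p ω

/-! `log |K|` is within `ε` of `H(K)` by uniformity, and `H(K)` within `ε` of `H(K | Z S)` by
secrecy. Enlarging the key to `(K, K̂)` gives `H(K | Z S) ≤ H(K | K̂ Z S) + H(K̂ | Z S)`; Fano's
inequality bounds the first term by `log 2 + Pr{K ≠ K̂} log |K|`, and the second is at most
`H(Y S | Z S)` because `K̂` is a function of `(Y, S)`. -/

namespace Real

lemma negMulLog_sum_le_sum_negMulLog {ι : Type*} (t : Finset ι) (x : ι → ℝ)
    (hx : ∀ i ∈ t, 0 ≤ x i) :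
    negMulLog (∑ i ∈ t, x i) ≤ ∑ i ∈ t, negMulLog (x i) := by
  set s := ∑ i ∈ t, x i
  have hterm : ∀ i ∈ t, x i * (-log s) ≤ negMulLog (x i) := by
    intro i hi
    rcases (hx i hi).eq_or_lt with h | h
    · simp [negMulLog, ← h]
    · have : log (x i) ≤ log s := log_le_log h (single_le_sum hx hi)
      simp only [negMulLog, neg_mul]
      nlinarith
  calc negMulLog s = ∑ i ∈ t, x i * (-log s) := by rw [← sum_mul, negMulLog]; ring
    _ ≤ ∑ i ∈ t, negMulLog (x i) := sum_le_sum hterm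

lemma sum_negMulLog_le_negMulLog_sum_add_mul_log_card {ι : Type*} (t : Finset ι)
    (x : ι → ℝ) (hx : ∀ i ∈ t, 0 ≤ x i) :
    ∑ i ∈ t, negMulLog (x i) ≤ negMulLog (∑ i ∈ t, x i) + (∑ i ∈ t, x i) * log #t := by
  set s := ∑ i ∈ t, x i with hs
  rcases t.eq_empty_or_nonempty with rfl | ht
  · simp [hs]
  have hN : (0 : ℝ) < #t := by exact_mod_cast ht.card_pos
  rcases (sum_nonneg hx).eq_or_lt with h0 | hspos
  · have hzero : ∀ i ∈ t, x i = 0 := (sum_eq_zero_iff_of_nonneg hx).1 h0.symm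
    simp [hs, ← h0, sum_congr rfl fun i hi => congrArg negMulLog (hzero i hi)]
  have jensen := concaveOn_negMulLog.le_map_sum (t := t) (w := fun _ => (#t : ℝ)⁻¹) (p := x)
    (fun _ _ => by positivity) (by simp [hN.ne']) (fun i hi => Set.mem_Ici.2 (hx i hi))
  simp only [smul_eq_mul, ← mul_sum, ← hs] at jensen
  have hscale : negMulLog ((#t : ℝ)⁻¹ * s) = (#t : ℝ)⁻¹ * (negMulLog s + s * log #t) := by
    rw [negMulLog, negMulLog, log_mul (inv_ne_zero hN.ne') hspos.ne', log_inv]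
    ring
  rw [hscale] at jensen
  exact le_of_mul_le_mul_left jensen (inv_pos.2 hN)

/-- Fano's inequality on a single fiber: guess `c`; the binary split "guess right / wrong" costs at
most `log 2`, and the wrong part at most `log |κ|` per unit of mass. -/
lemma sum_negMulLog_sub_negMulLog_sum_le {κ : Type*} [Fintype κ] [DecidableEq κ]
    (x : κ → ℝ) (hx : ∀ a, 0 ≤ x a) (c : κ) :
    ∑ a, negMulLog (x a) - negMulLog (∑ a, x a) ≤
      (∑ a, x a) * log 2 + (∑ a ∈ univ.erase c, x a) * log (Fintype.card κ) := by
  set e := ∑ a ∈ univ.erase c, x a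
  have he : 0 ≤ e := sum_nonneg fun a _ => hx a
  have hsplit : ∀ g : κ → ℝ, ∑ a, g a = g c + ∑ a ∈ univ.erase c, g a :=
    fun g => (add_sum_erase univ g (mem_univ c)).symm
  have hrest :
      ∑ a ∈ univ.erase c, negMulLog (x a) ≤ negMulLog e + e * log (Fintype.card κ) := by
    have hJ := sum_negMulLog_le_negMulLog_sum_add_mul_log_card (univ.erase c) x fun a _ => hx a
    have hcard : log #(univ.erase c) ≤ log (Fintype.card κ) := by
      rcases Nat.eq_zero_or_pos #(univ.erase c) with h | h
      · simp [h, log_natCast_nonneg]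
      · exact log_le_log (by exact_mod_cast h) (by exact_mod_cast card_erase_le)
    linarith [mul_le_mul_of_nonneg_left hcard he]
  have hpair : negMulLog (x c) + negMulLog e ≤ negMulLog (x c + e) + (x c + e) * log 2 := by
    simpa [Fintype.sum_bool] using
      sum_negMulLog_le_negMulLog_sum_add_mul_log_card univ (fun i : Bool => if i then x c else e)
        fun i _ => by cases i <;> simp [hx, he]
  rw [hsplit, hsplit x]
  linarith

end Real

open Real

section Entropy

variable {Ω α β γ : Type} [Fintype Ω] (p : Ω → ℝ)

lemma prOf_nonneg (hp : ∀ ω, 0 ≤ p ω) (A : Ω → Prop) [DecidablePred A] : 0 ≤ prOf p A :=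
  sum_nonneg fun ω _ => hp ω

lemma prOf_congr {A B : Ω → Prop} [DecidablePred A] [DecidablePred B] (h : ∀ ω, A ω ↔ B ω) :
    prOf p A = prOf p B := by
  simp only [prOf, filter_congr fun ω _ => h ω]

lemma sum_prOf_eq_prOf_mem [DecidableEq α] (f : Ω → α) (s : Finset α) :
    ∑ a ∈ s, prOf p (fun ω => f ω = a) = prOf p (fun ω => f ω ∈ s) :=
  sum_fiberwise_eq_sum_filter univ s f p

lemma sum_prOf_eq_one [Fintype α] [DecidableEq α] (hp1 : ∑ ω, p ω = 1) (f : Ω → α) :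
    ∑ a, prOf p (fun ω => f ω = a) = 1 :=
  (sum_fiberwise univ f p).trans hp1

lemma prOf_comp_eq [Fintype α] [DecidableEq α] [DecidableEq β] (f : Ω → α) (φ : α → β)
    (b : β) :
    prOf p (fun ω => φ (f ω) = b) =
      ∑ a ∈ univ.filter (fun a => φ a = b), prOf p (fun ω => f ω = a) := by
  rw [sum_prOf_eq_prOf_mem]
  exact prOf_congr p fun ω => by simp

lemma prOf_eq_sum_prOf_prod [Fintype α] [DecidableEq α] [DecidableEq β] (f : Ω → α)
    (w : Ω → β) (b : β) :
    prOf p (fun ω => w ω = b) = ∑ a, prOf p (fun ω => (f ω, w ω) = (a, b)) := by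
  rw [prOf, ← sum_fiberwise (univ.filter fun ω => w ω = b) f p]
  refine sum_congr rfl fun a _ => ?_
  rw [filter_filter]
  exact prOf_congr p fun ω => by simp [and_comm]

lemma ent_comp_le [Fintype α] [Fintype β] [DecidableEq α] [DecidableEq β] (hp : ∀ ω, 0 ≤ p ω)
    (f : Ω → α) (φ : α → β) :
    ent p (fun ω => φ (f ω)) ≤ ent p f := by
  calc ent p (fun ω => φ (f ω))
      = ∑ b, negMulLog (∑ a ∈ univ.filter (fun a => φ a = b), prOf p (fun ω => f ω = a)) :=
        sum_congr rfl fun b _ => by rw [← prOf_comp_eq]; rfl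
    _ ≤ ∑ b, ∑ a ∈ univ.filter (fun a => φ a = b), negMulLog (prOf p (fun ω => f ω = a)) :=
        sum_le_sum fun b _ => negMulLog_sum_le_sum_negMulLog _ _ fun a _ => prOf_nonneg p hp _
    _ = ent p f := sum_fiberwise univ φ _

lemma condEnt_comp_le [Fintype α] [Fintype β] [Fintype γ] [DecidableEq α] [DecidableEq β]
    [DecidableEq γ] (hp : ∀ ω, 0 ≤ p ω) (f : Ω → α) (φ : α → β) (w : Ω → γ) :
    condEnt p (fun ω => φ (f ω)) w ≤ condEnt p f w := by
  unfold condEnt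
  exact sub_le_sub_right (ent_comp_le p hp (fun ω => (f ω, w ω)) (Prod.map φ id)) _

lemma condEnt_le_condEnt_add_condEnt [Fintype α] [Fintype β] [Fintype γ] [DecidableEq α]
    [DecidableEq β] [DecidableEq γ] (hp : ∀ ω, 0 ≤ p ω) (f : Ω → α) (g : Ω → β) (w : Ω → γ) :
    condEnt p f w ≤ condEnt p f (fun ω => (g ω, w ω)) + condEnt p g w := by
  have := ent_comp_le p hp (fun ω => (f ω, g ω, w ω)) fun x => (x.1, x.2.2)
  unfold condEnt
  linarith

lemma condEnt_le_log_two_add_prOf_ne_mul_log_card {κ : Type} [Fintype κ] [Fintype β]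
    [DecidableEq κ] [DecidableEq β] (hp : ∀ ω, 0 ≤ p ω) (hp1 : ∑ ω, p ω = 1)
    (f : Ω → κ) (w : Ω → β) (φ : β → κ) :
    condEnt p f w ≤ log 2 + prOf p (fun ω => f ω ≠ φ (w ω)) * log (Fintype.card κ) := by
  set q : κ → β → ℝ := fun a b => prOf p (fun ω => (f ω, w ω) = (a, b))
  have hjoint : ent p (fun ω => (f ω, w ω)) = ∑ b, ∑ a, negMulLog (q a b) := by
    rw [ent, Fintype.sum_prod_type, sum_comm]
    rfl
  have hmarg : ent p w = ∑ b, negMulLog (∑ a, q a b) :=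
    sum_congr rfl fun b _ => by rw [← prOf_eq_sum_prOf_prod]; rfl
  have htotal : ∑ b, ∑ a, q a b = 1 := by
    simp only [q, ← prOf_eq_sum_prOf_prod, sum_prOf_eq_one p hp1]
  have herror : ∑ b, ∑ a ∈ univ.erase (φ b), q a b = prOf p (fun ω => f ω ≠ φ (w ω)) :=
    calc ∑ b, ∑ a ∈ univ.erase (φ b), q a b
        = ∑ x ∈ univ.filter (fun x : κ × β => x.1 ≠ φ x.2), q x.1 x.2 := by
          simp only [← filter_ne', sum_filter, Fintype.sum_prod_type]
          exact sum_comm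
      _ = prOf p (fun ω => f ω ≠ φ (w ω)) :=
          (sum_prOf_eq_prOf_mem p _ _).trans (prOf_congr p fun ω => by simp)
  calc condEnt p f w = ∑ b, (∑ a, negMulLog (q a b) - negMulLog (∑ a, q a b)) := by
        rw [condEnt, hjoint, hmarg, sum_sub_distrib]
    _ ≤ ∑ b, ((∑ a, q a b) * log 2 +
          (∑ a ∈ univ.erase (φ b), q a b) * log (Fintype.card κ)) :=
        sum_le_sum fun b _ =>
          sum_negMulLog_sub_negMulLog_sum_le _ (fun a => prOf_nonneg p hp _) (φ b)
    _ = log 2 + prOf p (fun ω => f ω ≠ φ (w ω)) * log (Fintype.card κ) := by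
        rw [sum_add_distrib, ← sum_mul, ← sum_mul, htotal, herror, one_mul]

end Entropy

theorem secret_key_rate_converse_general
    {Ω κ 𝒴 𝒵 𝒮 : Type} [Fintype Ω] [Fintype κ] [Fintype 𝒴] [Fintype 𝒵]
    [Fintype 𝒮] [DecidableEq κ] [DecidableEq 𝒴] [DecidableEq 𝒵] [DecidableEq 𝒮]
    (p : Ω → ℝ) (hp : ∀ ω, 0 ≤ p ω) (hp1 : ∑ ω, p ω = 1)
    (n : ℕ) (R : ℝ) (ε : ℝ)
    (K Khat : Ω → κ) (Y : Ω → 𝒴) (Z : Ω → 𝒵) (S : Ω → 𝒮)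
    -- the receiver computes its key from `(Yⁿ, Sⁿ)`
    (hKhat : ∃ g : 𝒴 × 𝒮 → κ, ∀ ω, Khat ω = g (Y ω, S ω))
    -- uniformity: `H(K) > log |K| - ε`
    (hUnif : Real.log (Fintype.card κ) - ε < ent p K)
    -- reliability: `Pr{K ≠ Khat} < ε`
    (hRel : prOf p (fun ω => K ω ≠ Khat ω) < ε)
    -- secrecy: `I(K; Zⁿ Sⁿ) < ε`
    (hSec : ent p K - condEnt p K (fun ω => (Z ω, S ω)) < ε)
    -- the key rate: `|K| ≥ 2^{nR}`, i.e. `n·R_SK ≤ log |K|`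
    (hRate : (n : ℝ) * R ≤ Real.log (Fintype.card κ)) :
    (n : ℝ) * R ≤ condEnt p (fun ω => (Y ω, S ω)) (fun ω => (Z ω, S ω)) +
      2 * ε + Real.log 2 + ε * Real.log (Fintype.card κ) := by
  obtain ⟨g, hg⟩ := hKhat
  obtain rfl : Khat = fun ω => g (Y ω, S ω) := funext hg
  have hchain :=
    condEnt_le_condEnt_add_condEnt p hp K (fun ω => g (Y ω, S ω)) fun ω => (Z ω, S ω)
  have hfano : condEnt p K (fun ω => (g (Y ω, S ω), Z ω, S ω)) ≤
      log 2 + ε * log (Fintype.card κ) :=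
    (condEnt_le_log_two_add_prOf_ne_mul_log_card p hp hp1 K _ Prod.fst).trans <|
      add_le_add_right (mul_le_mul_of_nonneg_right hRel.le (log_natCast_nonneg _)) _
  have hprocess := condEnt_comp_le p hp (fun ω => (Y ω, S ω)) g fun ω => (Z ω, S ω)
  linarith

/-- Converse bound for secret key generation over the single-hop broadcast
erasure channel with feedback: any scheme with (almost) uniform key, reliable
key agreement and secrecy from Eve satisfies
`n·R_SK ≤ H(Yⁿ Sⁿ | Zⁿ Sⁿ) + o(n)`, where the `o(n)` slack collects the terms
coming from uniformity, secrecy and Fano's inequality. -/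
theorem secret_key_rate_converse
    {Ω κ 𝒴 𝒵 𝒮 : Type} [Fintype Ω] [Fintype κ] [Fintype 𝒴] [Fintype 𝒵]
    [Fintype 𝒮] [DecidableEq κ] [DecidableEq 𝒴] [DecidableEq 𝒵] [DecidableEq 𝒮]
    [Nonempty κ]
    (p : Ω → ℝ) (hp : ∀ ω, 0 ≤ p ω) (hp1 : ∑ ω, p ω = 1)
    (n : ℕ) (R : ℝ) (ε : ℝ) (hε : 0 < ε)
    (K Khat : Ω → κ) (Y : Ω → 𝒴) (Z : Ω → 𝒵) (S : Ω → 𝒮)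
    -- the receiver computes its key from `(Yⁿ, Sⁿ)`
    (hKhat : ∃ g : 𝒴 × 𝒮 → κ, ∀ ω, Khat ω = g (Y ω, S ω))
    -- uniformity: `H(K) > log |K| - ε`
    (hUnif : Real.log (Fintype.card κ) - ε < ent p K)
    -- reliability: `Pr{K ≠ Khat} < ε`
    (hRel : prOf p (fun ω => K ω ≠ Khat ω) < ε)
    -- secrecy: `I(K; Zⁿ Sⁿ) < ε`
    (hSec : ent p K - condEnt p K (fun ω => (Z ω, S ω)) < ε)
    -- the key rate: `|K| ≥ 2^{nR}`, i.e. `n·R_SK ≤ log |K|`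
    (hRate : (n : ℝ) * R ≤ Real.log (Fintype.card κ)) :
    (n : ℝ) * R ≤ condEnt p (fun ω => (Y ω, S ω)) (fun ω => (Z ω, S ω)) +
      2 * ε + Real.log 2 + ε * Real.log (Fintype.card κ) :=
  secret_key_rate_converse_general p hp hp1 n R ε K Khat Y Z S hKhat hUnif hRel hSec hRate
end
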